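/- arXiv:2101.05039 — 3 statements merged into one kernel-verified Lean document; each statement's English description precedes it below -/
import Mathlib

section
/- Let m be a positive integer and γ > 0. Let s : ℝ → ℝᵐ be differentiable on [0,∞) with s(0) = 0, and suppose there exist functions w : ℝ → ℝᵐ and c : ℝ → ℝ such that for every t ≥ 0 one has ‖w(t)‖ ≤ c(t) and s′(t) = w(t) − (γ + c(t))·sgn(s(t)). Then s(t) = 0 for all t ≥ 0; i.e., the surface s = 0, started on at time 0, is maintained for all subsequent time. -/
/-! The sliding variable is a Lyapunov function candidate: `‖s‖²` has derivative
`2 ⟪s, ṡ⟫`, and the switching gain `γ + c` dominates the disturbance `w` because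
`⟪s, sgn s⟫ = ‖s‖₁ ≥ ‖s‖`. Hence `⟪s, ṡ⟫ ≤ -γ ‖s‖ ≤ 0`, so `‖s‖` is nonincreasing on
`[0, ∞)` and stays at its initial value `0`. -/

open scoped RealInnerProductSpace

/-- The componentwise sign vector: `(signVec s) i = 1` if `s i > 0`, `-1` if `s i < 0`,
and `0` if `s i = 0` (this is exactly `Real.sign`). -/
noncomputable def signVec {m : ℕ} (s : EuclideanSpace ℝ (Fin m)) : EuclideanSpace ℝ (Fin m) :=
  WithLp.toLp 2 (fun i => Real.sign (s i))

theorem antitoneOn_norm_of_inner_deriv_nonpos {E : Type*} [NormedAddCommGroup E]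
    [InnerProductSpace ℝ E] {D : Set ℝ} (hD : Convex ℝ D) {f f' : ℝ → E}
    (hf : ∀ t ∈ D, HasDerivWithinAt f (f' t) D t)
    (hf' : ∀ t ∈ interior D, ⟪f t, f' t⟫ ≤ 0) :
    AntitoneOn (‖f ·‖) D := by
  have hsq : AntitoneOn (‖f ·‖ ^ 2) D := by
    refine antitoneOn_of_hasDerivWithinAt_nonpos (f' := fun t => 2 * ⟪f t, f' t⟫) hD
      (fun t ht => (hf t ht).norm_sq.continuousWithinAt) (fun t ht => ?_)
      (fun t ht => by linarith [hf' t ht])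
    exact ((hf t (interior_subset ht)).norm_sq.hasDerivAt
      (mem_interior_iff_mem_nhds.mp ht)).hasDerivWithinAt
  intro x hx y hy hxy
  exact (pow_le_pow_iff_left₀ (norm_nonneg _) (norm_nonneg _) two_ne_zero).mp (hsq hx hy hxy)

theorem Real.self_mul_sign (x : ℝ) : x * Real.sign x = |x| := by
  rcases lt_trichotomy x 0 with h | rfl | h
  · rw [Real.sign_of_neg h, abs_of_neg h, mul_neg_one]
  · simp
  · rw [Real.sign_of_pos h, abs_of_pos h, mul_one]

theorem inner_signVec_self {m : ℕ} (x : EuclideanSpace ℝ (Fin m)) :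
    ⟪x, signVec x⟫ = ∑ i, |x i| := by
  simp only [PiLp.inner_apply, RCLike.inner_apply, conj_trivial, signVec]
  exact Finset.sum_congr rfl fun i _ => (mul_comm _ _).trans (Real.self_mul_sign (x i))

theorem EuclideanSpace.norm_le_sum_abs {ι : Type*} [Fintype ι] (x : EuclideanSpace ℝ ι) :
    ‖x‖ ≤ ∑ i, |x i| := by
  rw [EuclideanSpace.norm_eq, Real.sqrt_le_left (Finset.sum_nonneg fun i _ => abs_nonneg _)]
  simpa only [Real.norm_eq_abs, sq_abs] using
    Finset.sum_sq_le_sq_sum_of_nonneg (s := Finset.univ) fun i _ => abs_nonneg (x i)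

theorem inner_sub_smul_signVec_le {m : ℕ} (x w : EuclideanSpace ℝ (Fin m)) {γ c : ℝ}
    (hγ : 0 ≤ γ) (hw : ‖w‖ ≤ c) :
    ⟪x, w - (γ + c) • signVec x⟫ ≤ -(γ * ‖x‖) := by
  have hgain : (γ + c) * ‖x‖ ≤ (γ + c) * ⟪x, signVec x⟫ := by
    rw [inner_signVec_self]
    exact mul_le_mul_of_nonneg_left (EuclideanSpace.norm_le_sum_abs x)
      (by linarith [(norm_nonneg w).trans hw])
  have hdist : ⟪x, w⟫ ≤ ‖x‖ * c :=
    (real_inner_le_norm x w).trans (mul_le_mul_of_nonneg_left hw (norm_nonneg x))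
  rw [inner_sub_right, real_inner_smul_right]
  linarith

theorem sliding_surface_maintained_general
    (m : ℕ) (γ : ℝ) (hγ : 0 < γ)
    (s w : ℝ → EuclideanSpace ℝ (Fin m)) (c : ℝ → ℝ)
    (hs0 : s 0 = 0)
    (hw : ∀ t ≥ (0 : ℝ), ‖w t‖ ≤ c t)
    (hderiv : ∀ t ≥ (0 : ℝ),
      HasDerivWithinAt s (w t - (γ + c t) • signVec (s t)) (Set.Ici 0) t) :
    ∀ t ≥ (0 : ℝ), s t = 0 := by
  have hanti : AntitoneOn (‖s ·‖) (Set.Ici 0) := by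
    refine antitoneOn_norm_of_inner_deriv_nonpos (convex_Ici 0) hderiv fun t ht => ?_
    rw [interior_Ici] at ht
    exact (inner_sub_smul_signVec_le _ _ hγ.le (hw t ht.le)).trans
      (neg_nonpos.mpr (mul_nonneg hγ.le (norm_nonneg _)))
  intro t ht
  have : ‖s t‖ ≤ ‖s 0‖ := hanti Set.self_mem_Ici ht ht
  rwa [hs0, norm_zero, norm_le_zero_iff] at this

/-- if `s(0) = 0`, `s` is differentiable on `[0,∞)` with
`s′(t) = w(t) − (γ + c(t)) • sgn(s(t))` and `‖w(t)‖ ≤ c(t)` for all `t ≥ 0`, then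
`s(t) = 0` for all `t ≥ 0`: the sliding surface, started on at time 0, is maintained. -/
theorem sliding_surface_maintained
    (m : ℕ) (hm : 0 < m) (γ : ℝ) (hγ : 0 < γ)
    (s w : ℝ → EuclideanSpace ℝ (Fin m)) (c : ℝ → ℝ)
    (hs0 : s 0 = 0)
    (hw : ∀ t ≥ (0 : ℝ), ‖w t‖ ≤ c t)
    (hderiv : ∀ t ≥ (0 : ℝ),
      HasDerivWithinAt s (w t - (γ + c t) • signVec (s t)) (Set.Ici 0) t) :
    ∀ t ≥ (0 : ℝ), s t = 0 :=
  sliding_surface_maintained_general m γ hγ s w c hs0 hw hderiv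
end

section
/- Let n, m be positive integers and P a symmetric positive definite real (n+m)×(n+m) matrix; set Sₓ := R₂ᵀPR₁ and S_u := R₂ᵀPR₂. Let Ā and ΔĀ be real n×(n+m) matrices, K̄ a real m×(n+m) matrix, C̄ ∈ ℝⁿ⁺ᵐ, ΔC ∈ ℝⁿ, and set Λ := P(R₁Ā + R₂K̄) + (R₁Ā + R₂K̄)ᵀP. Then for every x̄ ∈ ℝⁿ⁺ᵐ, writing G(x̄) := (R₁Ā + R₂K̄ + (R₁ − R₂S_u⁻¹Sₓ)ΔĀ)x̄ + C̄ + (R₁ − R₂S_u⁻¹Sₓ)ΔC for the sliding-motion vector field, one has: 2 x̄ᵀ P G(x̄) ≤ x̄ᵀ(Λ + P R₁ ΔĀ + (P R₁ ΔĀ)ᵀ + ΔĀᵀ R₁ᵀ P R₁ ΔĀ + 2 P R₂ (R₂ᵀPR₂)⁻¹ R₂ᵀ P) x̄ + 2 x̄ᵀ P C̄ + ΔCᵀ R₁ᵀ P R₁ ΔC + 2 x̄ᵀ P R₁ ΔC. -/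
open Matrix

/-- The block matrix `R₁ = [Iₙ; 0] : ℝ^{(n+m)×n}`. -/
def R1 (n m : ℕ) : Matrix (Fin n ⊕ Fin m) (Fin n) ℝ :=
  Matrix.of fun i j => if i = Sum.inl j then 1 else 0

/-- The block matrix `R₂ = [0; Iₘ] : ℝ^{(n+m)×m}`. -/
def R2 (n m : ℕ) : Matrix (Fin n ⊕ Fin m) (Fin m) ℝ :=
  Matrix.of fun i j => if i = Sum.inr j then 1 else 0

/-! With `Q := P R₂ (R₂ᵀPR₂)⁻¹ R₂ᵀP` one has `P (R₁ - R₂ S_u⁻¹ Sₓ) = (P - Q) R₁`, and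
`0 ≤ Q ≤ P` in the Loewner order: `Q` is a congruence of `(R₂ᵀPR₂)⁻¹`, and `P - Q = (1 - E)ᵀ P (1 - E)`
for the `P`-orthogonal projection `E = R₂ (R₂ᵀPR₂)⁻¹ R₂ᵀP` onto the range of `R₂`. Expanding both
sides, what remains are the cross terms `-2 x̄ᵀQy` for `y = R₁ΔĀx̄` and `y = R₁ΔC`, each bounded by
`x̄ᵀQx̄ + yᵀPy` because `(x̄ + y)ᵀQ(x̄ + y) ≥ 0` and `yᵀ(P - Q)y ≥ 0`. -/

namespace Matrix

variable {ι κ : Type*} [Fintype ι] [Fintype κ]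

theorem dotProduct_transpose_mul_mul_mulVec {α : Type*} [CommSemiring α] (A : Matrix ι ι α)
    (B : Matrix ι κ α) (v : κ → α) :
    v ⬝ᵥ (Bᵀ * A * B) *ᵥ v = B *ᵥ v ⬝ᵥ A *ᵥ (B *ᵥ v) := by
  rw [Matrix.mul_assoc, ← mulVec_mulVec, dotProduct_transpose_mulVec, dotProduct_comm,
    mulVec_mulVec]

theorem neg_two_mul_dotProduct_mulVec_le {P Q : Matrix ι ι ℝ} (hQ : Q.PosSemidef)
    (hPQ : (P - Q).PosSemidef) (x y : ι → ℝ) :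
    -(2 * (x ⬝ᵥ Q *ᵥ y)) ≤ x ⬝ᵥ Q *ᵥ x + y ⬝ᵥ P *ᵥ y := by
  have hQ_symm : Qᵀ = Q := (isHermitian_iff_isSymm.mp hQ.isHermitian).eq
  have hxy := hQ.dotProduct_mulVec_nonneg (x + y)
  have hy := hPQ.dotProduct_mulVec_nonneg y
  simp only [star_trivial, mulVec_add, add_dotProduct, dotProduct_add, sub_mulVec,
    dotProduct_sub, ← dotProduct_transpose_mulVec Q x y, hQ_symm] at hxy hy
  linarith

variable {P : Matrix ι ι ℝ} {W : Matrix ι κ ℝ}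

theorem PosDef.transpose_mul_mul_same (hP : P.PosDef) (hW : Function.Injective W.mulVec) :
    (Wᵀ * P * W).PosDef := by
  simpa only [conjTranspose_eq_transpose_of_trivial] using hP.conjTranspose_mul_mul_same hW

variable [DecidableEq κ]

theorem PosDef.posSemidef_mul_mul_inv_mul_mul (hP : P.PosDef) (hW : Function.Injective W.mulVec) :
    (P * W * (Wᵀ * P * W)⁻¹ * Wᵀ * P).PosSemidef := by
  have hP_symm : Pᵀ = P := (isHermitian_iff_isSymm.mp hP.isHermitian).eq
  simpa [conjTranspose_eq_transpose_of_trivial, transpose_mul, hP_symm, Matrix.mul_assoc] using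
    (hP.transpose_mul_mul_same hW).inv.posSemidef.conjTranspose_mul_mul_same (Wᵀ * P)

theorem PosDef.posSemidef_sub_mul_mul_inv_mul_mul (hP : P.PosDef)
    (hW : Function.Injective W.mulVec) :
    (P - P * W * (Wᵀ * P * W)⁻¹ * Wᵀ * P).PosSemidef := by
  classical
  have hP_symm : Pᵀ = P := (isHermitian_iff_isSymm.mp hP.isHermitian).eq
  have hS := hP.transpose_mul_mul_same hW
  set S := Wᵀ * P * W
  have hS_symm : S⁻¹ᵀ = S⁻¹ := (isHermitian_iff_isSymm.mp hS.inv.isHermitian).eq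
  set Q := P * W * S⁻¹ * Wᵀ * P
  set E := W * S⁻¹ * Wᵀ * P
  have hPE : P * E = Q := by simp only [Q, E, Matrix.mul_assoc]
  have hEP : Eᵀ * P = Q := by
    simp only [Q, E, transpose_mul, transpose_transpose, hP_symm, hS_symm, Matrix.mul_assoc]
  have hQE : Q * E = Q := calc
    Q * E = P * W * (S⁻¹ * S) * S⁻¹ * Wᵀ * P := by simp only [Q, E, S, Matrix.mul_assoc]
    _ = Q := by rw [nonsing_inv_mul _ ((isUnit_iff_isUnit_det _).mp hS.isUnit), Matrix.mul_one]
  have hgram : (1 - E)ᵀ * P * (1 - E) = P - Q := by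
    rw [transpose_sub, transpose_one, Matrix.sub_mul, Matrix.one_mul, hEP, Matrix.mul_sub,
      Matrix.mul_one, Matrix.sub_mul, hPE, hQE, sub_self, sub_zero]
  rw [← hgram]
  simpa only [conjTranspose_eq_transpose_of_trivial] using
    hP.posSemidef.conjTranspose_mul_mul_same (1 - E)

end Matrix

theorem R2_mulVec_injective (n m : ℕ) : Function.Injective (R2 n m).mulVec := fun y y' h ↦
  funext fun j ↦ by simpa [R2, mulVec, dotProduct] using congrFun h (Sum.inr j)

theorem lyapunov_derivative_bound_33_general
    (n m : ℕ)
    (P : Matrix (Fin n ⊕ Fin m) (Fin n ⊕ Fin m) ℝ) (hP : P.PosDef)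
    (Sx : Matrix (Fin m) (Fin n) ℝ) (hSx : Sx = (R2 n m)ᵀ * P * R1 n m)
    (Su : Matrix (Fin m) (Fin m) ℝ) (hSu : Su = (R2 n m)ᵀ * P * R2 n m)
    (Abar ΔA : Matrix (Fin n) (Fin n ⊕ Fin m) ℝ)
    (Kbar : Matrix (Fin m) (Fin n ⊕ Fin m) ℝ)
    (Cbar : Fin n ⊕ Fin m → ℝ) (ΔC : Fin n → ℝ)
    (Λ : Matrix (Fin n ⊕ Fin m) (Fin n ⊕ Fin m) ℝ)
    (hΛ : Λ = P * (R1 n m * Abar + R2 n m * Kbar)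
      + (R1 n m * Abar + R2 n m * Kbar)ᵀ * P) :
    ∀ xbar : Fin n ⊕ Fin m → ℝ,
      2 * (xbar ⬝ᵥ P.mulVec
          ((R1 n m * Abar + R2 n m * Kbar
              + (R1 n m - R2 n m * Su⁻¹ * Sx) * ΔA).mulVec xbar
            + Cbar + (R1 n m - R2 n m * Su⁻¹ * Sx).mulVec ΔC))
        ≤ xbar ⬝ᵥ (Λ + P * R1 n m * ΔA + (P * R1 n m * ΔA)ᵀ
              + ΔAᵀ * (R1 n m)ᵀ * P * R1 n m * ΔA
              + (2 : ℝ) • (P * R2 n m * ((R2 n m)ᵀ * P * R2 n m)⁻¹ * (R2 n m)ᵀ * P)).mulVec xbar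
          + 2 * (xbar ⬝ᵥ P.mulVec Cbar)
          + ΔC ⬝ᵥ ((R1 n m)ᵀ * P * R1 n m).mulVec ΔC
          + 2 * (xbar ⬝ᵥ (P * R1 n m).mulVec ΔC) := by
  intro x
  subst hSx hSu hΛ
  set V := R1 n m
  set W := R2 n m
  set Q := P * W * (Wᵀ * P * W)⁻¹ * Wᵀ * P
  set M := V * Abar + W * Kbar
  set E := V - W * (Wᵀ * P * W)⁻¹ * (Wᵀ * P * V)
  have hQ : Q.PosSemidef := hP.posSemidef_mul_mul_inv_mul_mul (R2_mulVec_injective n m)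
  have hPQ : (P - Q).PosSemidef :=
    hP.posSemidef_sub_mul_mul_inv_mul_mul (R2_mulVec_injective n m)
  have hPE (v : Fin n → ℝ) : P *ᵥ (E *ᵥ v) = (P - Q) *ᵥ (V *ᵥ v) := by
    simp only [mulVec_mulVec, E, Q, Matrix.mul_sub, Matrix.sub_mul, Matrix.mul_assoc]
  have hMP : Mᵀ * P = (P * M)ᵀ := by
    rw [transpose_mul, (isHermitian_iff_isSymm.mp hP.isHermitian).eq]
  have hΔA : ΔAᵀ * Vᵀ * P * V * ΔA = (V * ΔA)ᵀ * P * (V * ΔA) := by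
    simp only [transpose_mul, Matrix.mul_assoc]
  have hy := neg_two_mul_dotProduct_mulVec_le hQ hPQ x (V *ᵥ (ΔA *ᵥ x))
  have hz := neg_two_mul_dotProduct_mulVec_le hQ hPQ x (V *ᵥ ΔC)
  simp only [add_mulVec, mulVec_add, dotProduct_add, smul_mulVec, dotProduct_smul, smul_eq_mul,
    hMP, hΔA, dotProduct_transpose_mulVec, dotProduct_transpose_mul_mul_mulVec]
  simp only [← mulVec_mulVec, hPE, sub_mulVec, dotProduct_sub]
  linarith

/-- inequality (33) of the paper: with `P` symmetric positive definite,
`Sₓ = R₂ᵀPR₁`, `S_u = R₂ᵀPR₂`, `Λ = P(R₁Ā + R₂K̄) + (R₁Ā + R₂K̄)ᵀP`, and with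
`G(x̄) = (R₁Ā + R₂K̄ + (R₁ − R₂S_u⁻¹Sₓ)ΔĀ)x̄ + C̄ + (R₁ − R₂S_u⁻¹Sₓ)ΔC` the
sliding-motion vector field, the Lyapunov derivative `2 x̄ᵀ P G(x̄)` is bounded by
`x̄ᵀ(Λ + PR₁ΔĀ + (PR₁ΔĀ)ᵀ + ΔĀᵀR₁ᵀPR₁ΔĀ + 2PR₂(R₂ᵀPR₂)⁻¹R₂ᵀP)x̄ + 2x̄ᵀPC̄
  + ΔCᵀR₁ᵀPR₁ΔC + 2x̄ᵀPR₁ΔC`. -/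
theorem lyapunov_derivative_bound_33
    (n m : ℕ) (hn : 0 < n) (hm : 0 < m)
    (P : Matrix (Fin n ⊕ Fin m) (Fin n ⊕ Fin m) ℝ) (hP : P.PosDef)
    (Sx : Matrix (Fin m) (Fin n) ℝ) (hSx : Sx = (R2 n m)ᵀ * P * R1 n m)
    (Su : Matrix (Fin m) (Fin m) ℝ) (hSu : Su = (R2 n m)ᵀ * P * R2 n m)
    (Abar ΔA : Matrix (Fin n) (Fin n ⊕ Fin m) ℝ)
    (Kbar : Matrix (Fin m) (Fin n ⊕ Fin m) ℝ)
    (Cbar : Fin n ⊕ Fin m → ℝ) (ΔC : Fin n → ℝ)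
    (Λ : Matrix (Fin n ⊕ Fin m) (Fin n ⊕ Fin m) ℝ)
    (hΛ : Λ = P * (R1 n m * Abar + R2 n m * Kbar)
      + (R1 n m * Abar + R2 n m * Kbar)ᵀ * P) :
    ∀ xbar : Fin n ⊕ Fin m → ℝ,
      2 * (xbar ⬝ᵥ P.mulVec
          ((R1 n m * Abar + R2 n m * Kbar
              + (R1 n m - R2 n m * Su⁻¹ * Sx) * ΔA).mulVec xbar
            + Cbar + (R1 n m - R2 n m * Su⁻¹ * Sx).mulVec ΔC))
        ≤ xbar ⬝ᵥ (Λ + P * R1 n m * ΔA + (P * R1 n m * ΔA)ᵀ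
              + ΔAᵀ * (R1 n m)ᵀ * P * R1 n m * ΔA
              + (2 : ℝ) • (P * R2 n m * ((R2 n m)ᵀ * P * R2 n m)⁻¹ * (R2 n m)ᵀ * P)).mulVec xbar
          + 2 * (xbar ⬝ᵥ P.mulVec Cbar)
          + ΔC ⬝ᵥ ((R1 n m)ᵀ * P * R1 n m).mulVec ΔC
          + 2 * (xbar ⬝ᵥ (P * R1 n m).mulVec ΔC) :=
  lyapunov_derivative_bound_33_general n m P hP Sx hSx Su hSu Abar ΔA Kbar Cbar ΔC Λ hΛ
end

section
/- Let n, m be positive integers, ε_{f0} ≥ 0, and P a symmetric positive definite real (n+m)×(n+m) matrix. Let Ā₀ be a real n×(n+m) matrix, K̄₀ a real m×(n+m) matrix, and η₀ > 0. Set Λ₀ := P(R₁Ā₀ + R₂K̄₀) + (R₁Ā₀ + R₂K̄₀)ᵀP. Suppose the symmetric block matrix with diagonal block sizes (n+m, n, m) given by [[Λ₀ + η₀ε_{f0}²I_{n+m}, PR₁, PR₂], [⋆, R₁ᵀPR₁ − η₀Iₙ, 0], [⋆, ⋆, −R₂ᵀPR₂]] is negative definite (⋆ denoting entries determined by symmetry).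 Then for every x̄ ∈ ℝⁿ⁺ᵐ with x̄ ≠ 0 and every a ∈ ℝⁿ with ‖a‖ ≤ ε_{f0}‖x̄‖: x̄ᵀΛ₀x̄ + x̄ᵀ P R₂ (R₂ᵀPR₂)⁻¹ R₂ᵀ P x̄ + 2 x̄ᵀ P R₁ a + aᵀ R₁ᵀ P R₁ a < 0. -/
open Matrix

/-!
Evaluate the quadratic form of the LMI at `z = (x̄, a, S_u⁻¹ R₂ᵀ P x̄)`. With `B = P R₂`, this
choice of `z₂` maximises `2 x̄ᵀ B z₂ − z₂ᵀ S_u z₂` (completing the square), and the maximum is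
exactly the term `x̄ᵀ P R₂ S_u⁻¹ R₂ᵀ P x̄` of the claim. What remains of the LMI differs from the
claimed expression by `η₀ (ε_{f0}² ‖x̄‖² − ‖a‖²) ≥ 0`.
-/

namespace Matrix

variable {k l R : Type*} [Fintype l] [CommRing R]

theorem IsSymm.transpose_mul_mul {P : Matrix l l R} (hP : P.IsSymm) (B : Matrix l k R) :
    (Bᵀ * P * B).IsSymm := by
  simp only [IsSymm, transpose_mul, transpose_transpose, hP.eq, Matrix.mul_assoc]

theorem nonsing_inv_mul_mul_nonsing_inv [DecidableEq l] (S : Matrix l l R) :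
    S⁻¹ * S * S⁻¹ = S⁻¹ := by
  by_cases h : IsUnit S.det
  · rw [nonsing_inv_mul S h, Matrix.one_mul]
  · rw [nonsing_inv_apply_not_isUnit S h, Matrix.zero_mul, Matrix.zero_mul]

theorem IsSymm.two_mul_dotProduct_mulVec_inv_sub [Fintype k] [DecidableEq l] {S : Matrix l l R}
    (hS : S.IsSymm) (B : Matrix k l R) (x : k → R) :
    2 * (x ⬝ᵥ B *ᵥ (S⁻¹ *ᵥ (Bᵀ *ᵥ x)))
        - (S⁻¹ *ᵥ (Bᵀ *ᵥ x)) ⬝ᵥ S *ᵥ (S⁻¹ *ᵥ (Bᵀ *ᵥ x))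
      = x ⬝ᵥ (B * S⁻¹ * Bᵀ) *ᵥ x := by
  have hquad : (S⁻¹ *ᵥ (Bᵀ *ᵥ x)) ⬝ᵥ S *ᵥ (S⁻¹ *ᵥ (Bᵀ *ᵥ x)) = x ⬝ᵥ (B * S⁻¹ * Bᵀ) *ᵥ x := by
    rw [mulVec_mulVec, mulVec_mulVec, dotProduct_comm, dotProduct_mulVec, vecMul_mulVec,
      dotProduct_comm, ← mulVec_transpose]
    simp only [transpose_mul, transpose_transpose, hS.inv.eq, hS.eq, ← Matrix.mul_assoc,
      nonsing_inv_mul_mul_nonsing_inv]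
  rw [hquad, mulVec_mulVec, mulVec_mulVec, Matrix.mul_assoc]
  ring

end Matrix

theorem EuclideanSpace.dotProduct_self_eq_norm_sq {ι : Type*} [Fintype ι]
    (x : EuclideanSpace ℝ ι) : x.ofLp ⬝ᵥ x.ofLp = ‖x‖ ^ 2 := by
  rw [← real_inner_self_eq_norm_sq, EuclideanSpace.inner_eq_star_dotProduct, star_trivial]

theorem lmi_25_implies_origin_region_bound_general
    (n m : ℕ)
    (εf0 : ℝ)
    (P : Matrix (Fin n ⊕ Fin m) (Fin n ⊕ Fin m) ℝ) (hP : P.PosDef)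
    (η₀ : ℝ) (hη₀ : 0 < η₀)
    (Λ₀ : Matrix (Fin n ⊕ Fin m) (Fin n ⊕ Fin m) ℝ)
    (hLMI : ∀ (z₀ : Fin n ⊕ Fin m → ℝ) (z₁ : Fin n → ℝ) (z₂ : Fin m → ℝ),
      ¬(z₀ = 0 ∧ z₁ = 0 ∧ z₂ = 0) →
      z₀ ⬝ᵥ (Λ₀ + (η₀ * εf0 ^ 2) • (1 : Matrix (Fin n ⊕ Fin m) (Fin n ⊕ Fin m) ℝ)).mulVec z₀
        + 2 * (z₀ ⬝ᵥ (P * R1 n m).mulVec z₁)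
        + 2 * (z₀ ⬝ᵥ (P * R2 n m).mulVec z₂)
        + z₁ ⬝ᵥ ((R1 n m)ᵀ * P * R1 n m - η₀ • (1 : Matrix (Fin n) (Fin n) ℝ)).mulVec z₁
        - z₂ ⬝ᵥ ((R2 n m)ᵀ * P * R2 n m).mulVec z₂ < 0) :
    ∀ (xbar : EuclideanSpace ℝ (Fin n ⊕ Fin m)) (a : EuclideanSpace ℝ (Fin n)),
      xbar ≠ 0 → ‖a‖ ≤ εf0 * ‖xbar‖ →
      xbar ⬝ᵥ Λ₀.mulVec xbar
        + xbar ⬝ᵥ (P * R2 n m * ((R2 n m)ᵀ * P * R2 n m)⁻¹ * (R2 n m)ᵀ * P).mulVec xbar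
        + 2 * (xbar ⬝ᵥ (P * R1 n m).mulVec a)
        + a ⬝ᵥ ((R1 n m)ᵀ * P * R1 n m).mulVec a < 0 := by
  intro xbar a hxbar ha
  have hPsymm : P.IsSymm := isHermitian_iff_isSymm.1 hP.isHermitian
  have hschur := (hPsymm.transpose_mul_mul (R2 n m)).two_mul_dotProduct_mulVec_inv_sub
    (P * R2 n m) xbar
  rw [transpose_mul, hPsymm.eq, ← Matrix.mul_assoc] at hschur
  have hlmi := hLMI xbar a (((R2 n m)ᵀ * P * R2 n m)⁻¹ *ᵥ (((R2 n m)ᵀ * P) *ᵥ xbar))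
    (fun h => hxbar (by simpa using h.1))
  simp only [add_mulVec, sub_mulVec, smul_mulVec, one_mulVec, dotProduct_add, dotProduct_sub,
    dotProduct_smul, smul_eq_mul] at hlmi
  have hnorm : η₀ * (a.ofLp ⬝ᵥ a.ofLp) ≤ η₀ * εf0 ^ 2 * (xbar.ofLp ⬝ᵥ xbar.ofLp) := by
    rw [EuclideanSpace.dotProduct_self_eq_norm_sq, EuclideanSpace.dotProduct_self_eq_norm_sq,
      mul_assoc, ← mul_pow]
    exact mul_le_mul_of_nonneg_left (pow_le_pow_left₀ (norm_nonneg a) ha 2) hη₀.le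
  linarith

/-- LMI (25) of the origin region: negative definiteness of the
symmetric block matrix with diagonal block sizes `(n+m, n, m)`,
`[[Λ₀ + η₀ε_{f0}²I, PR₁, PR₂], [⋆, R₁ᵀPR₁ − η₀Iₙ, 0], [⋆, ⋆, −R₂ᵀPR₂]]`
(expressed here, as in the paper, via its quadratic form: `zᵀMz < 0` for all `z ≠ 0`),
implies, for every `x̄ ≠ 0` and every `a` with `‖a‖ ≤ ε_{f0}‖x̄‖`:
`x̄ᵀΛ₀x̄ + x̄ᵀPR₂(R₂ᵀPR₂)⁻¹R₂ᵀPx̄ + 2x̄ᵀPR₁a + aᵀR₁ᵀPR₁a < 0`. -/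
theorem lmi_25_implies_origin_region_bound
    (n m : ℕ) (hn : 0 < n) (hm : 0 < m)
    (εf0 : ℝ) (hεf0 : 0 ≤ εf0)
    (P : Matrix (Fin n ⊕ Fin m) (Fin n ⊕ Fin m) ℝ) (hP : P.PosDef)
    (Abar0 : Matrix (Fin n) (Fin n ⊕ Fin m) ℝ)
    (Kbar0 : Matrix (Fin m) (Fin n ⊕ Fin m) ℝ)
    (η₀ : ℝ) (hη₀ : 0 < η₀)
    (Λ₀ : Matrix (Fin n ⊕ Fin m) (Fin n ⊕ Fin m) ℝ)
    (hΛ₀ : Λ₀ = P * (R1 n m * Abar0 + R2 n m * Kbar0)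
      + (R1 n m * Abar0 + R2 n m * Kbar0)ᵀ * P)
    (hLMI : ∀ (z₀ : Fin n ⊕ Fin m → ℝ) (z₁ : Fin n → ℝ) (z₂ : Fin m → ℝ),
      ¬(z₀ = 0 ∧ z₁ = 0 ∧ z₂ = 0) →
      z₀ ⬝ᵥ (Λ₀ + (η₀ * εf0 ^ 2) • (1 : Matrix (Fin n ⊕ Fin m) (Fin n ⊕ Fin m) ℝ)).mulVec z₀
        + 2 * (z₀ ⬝ᵥ (P * R1 n m).mulVec z₁)
        + 2 * (z₀ ⬝ᵥ (P * R2 n m).mulVec z₂)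
        + z₁ ⬝ᵥ ((R1 n m)ᵀ * P * R1 n m - η₀ • (1 : Matrix (Fin n) (Fin n) ℝ)).mulVec z₁
        - z₂ ⬝ᵥ ((R2 n m)ᵀ * P * R2 n m).mulVec z₂ < 0) :
    ∀ (xbar : EuclideanSpace ℝ (Fin n ⊕ Fin m)) (a : EuclideanSpace ℝ (Fin n)),
      xbar ≠ 0 → ‖a‖ ≤ εf0 * ‖xbar‖ →
      xbar ⬝ᵥ Λ₀.mulVec xbar
        + xbar ⬝ᵥ (P * R2 n m * ((R2 n m)ᵀ * P * R2 n m)⁻¹ * (R2 n m)ᵀ * P).mulVec xbar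
        + 2 * (xbar ⬝ᵥ (P * R1 n m).mulVec a)
        + a ⬝ᵥ ((R1 n m)ᵀ * P * R1 n m).mulVec a < 0 :=
  lmi_25_implies_origin_region_bound_general n m εf0 P hP η₀ hη₀ Λ₀ hLMI
end
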